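/- Let Γ_ε = {y + εh(y)ν(y) : y ∈ Γ_0} be a normal perturbation of a smooth closed curve Γ_0 by a smooth function h, where ν is a smooth transversal vector field. Then the first variation of the unit normal is (d/dε)|_{ε=0} ν_{Γ_ε} = −[h (d_yν[τ_0] · ν_0) + h' (ν · ν_0)] τ_0, where h' is the arclength derivative of h. -/

import Mathlib

open Real
open scoped RealInnerProductSpace

/-!
Differentiating `‖N‖ = 1` shows that `∂_ε N` is orthogonal to `N(0) = ν₀`, and differentiating the
orthogonality of `N` to the tangent `τ₀ + ε u` of `Γ_ε` gives `⟪∂_ε N, τ₀⟫ = -⟪ν₀, u⟫`. In the plane,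
`(τ₀, ν₀)` is an orthonormal basis, so `∂_ε N = -⟪ν₀, u⟫ τ₀` with
`u = h' ν + h d_yν[τ₀]`.
-/

section

variable {E : Type*} [NormedAddCommGroup E] [InnerProductSpace ℝ E]

theorem inner_add_inner_eq_zero_of_inner_eq_const {f g : ℝ → E} {f' g' : E} {t c : ℝ}
    (hf : HasDerivAt f f' t) (hg : HasDerivAt g g' t) (hc : ∀ x, ⟪f x, g x⟫ = c) :
    ⟪f t, g'⟫ + ⟪f', g t⟫ = 0 :=
  (hf.inner ℝ hg).unique (funext hc ▸ hasDerivAt_const t c)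

theorem inner_deriv_eq_zero_of_norm_eq_one {f : ℝ → E} {f' : E} {t : ℝ}
    (hf : HasDerivAt f f' t) (hunit : ∀ x, ‖f x‖ = 1) : ⟪f t, f'⟫ = 0 := by
  have h := inner_add_inner_eq_zero_of_inner_eq_const hf hf (c := 1) fun x => by
    rw [real_inner_self_eq_norm_sq, hunit, one_pow]
  rw [real_inner_comm (f t) f'] at h
  linarith

theorem eq_inner_smul_add_inner_smul_of_finrank_eq_two [FiniteDimensional ℝ E]
    (hE : Module.finrank ℝ E = 2) {τ ν : E} (hτ : ‖τ‖ = 1) (hν : ‖ν‖ = 1) (hτν : ⟪τ, ν⟫ = 0)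
    (w : E) : w = ⟪τ, w⟫ • τ + ⟪ν, w⟫ • ν := by
  have hon : Orthonormal ℝ ![τ, ν] := by
    refine ⟨fun i => by fin_cases i <;> simpa, fun i j hij => ?_⟩
    fin_cases i <;> fin_cases j <;> simp_all [real_inner_comm τ ν]
  let b := basisOfOrthonormalOfCardEqFinrank hon (by simp [hE])
  have hb : ⇑b = ![τ, ν] := coe_basisOfOrthonormalOfCardEqFinrank hon _
  have hsum := (b.toOrthonormalBasis (hb ▸ hon)).sum_repr' w
  rw [Module.Basis.coe_toOrthonormalBasis, hb, Fin.sum_univ_two] at hsum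
  simpa using hsum.symm

end

theorem first_variation_unit_normal_general
    (γ₀ τ₀ ν₀ : ℝ → EuclideanSpace ℝ (Fin 2))
    (ν : EuclideanSpace ℝ (Fin 2) → EuclideanSpace ℝ (Fin 2))
    (h : ℝ → ℝ) (N : ℝ → ℝ → EuclideanSpace ℝ (Fin 2))
    (hτunit : ∀ s, ‖τ₀ s‖ = 1) (hνunit : ∀ s, ‖ν₀ s‖ = 1)
    (horth : ∀ s, ⟪τ₀ s, ν₀ s⟫ = 0)
    (hN0 : ∀ s, N 0 s = ν₀ s)
    (hNunit : ∀ ε s, ‖N ε s‖ = 1)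
    -- `N(ε,s)` is orthogonal to the tangent vector of `Γ_ε` at `γ₀(s) + εh(s)ν(γ₀(s))`:
    (hNorth : ∀ ε s, ⟪N ε s,
      τ₀ s + ε • (deriv h s • ν (γ₀ s) + h s • fderiv ℝ ν (γ₀ s) (τ₀ s))⟫ = 0)
    (hNdiff : ∀ s, DifferentiableAt ℝ (fun ε => N ε s) 0) :
    ∀ s, deriv (fun ε => N ε s) 0
      = -(h s * ⟪fderiv ℝ ν (γ₀ s) (τ₀ s), ν₀ s⟫ + deriv h s * ⟪ν (γ₀ s), ν₀ s⟫) • τ₀ s := by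
  intro s
  set u := deriv h s • ν (γ₀ s) + h s • fderiv ℝ ν (γ₀ s) (τ₀ s)
  set V := deriv (fun ε => N ε s) 0
  have hN : HasDerivAt (fun ε => N ε s) V 0 := (hNdiff s).hasDerivAt
  have htangent : HasDerivAt (fun ε : ℝ => τ₀ s + ε • u) u 0 := by
    simpa using ((hasDerivAt_id (0 : ℝ)).smul_const u).const_add (τ₀ s)
  have hVν : ⟪ν₀ s, V⟫ = 0 := by
    simpa only [hN0] using inner_deriv_eq_zero_of_norm_eq_one hN (hNunit · s)
  have hVτ : ⟪τ₀ s, V⟫ = -⟪ν₀ s, u⟫ := by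
    have := inner_add_inner_eq_zero_of_inner_eq_const hN htangent (hNorth · s)
    rw [hN0, zero_smul, add_zero, real_inner_comm (τ₀ s)] at this
    linarith
  have hνu : ⟪ν₀ s, u⟫
      = h s * ⟪fderiv ℝ ν (γ₀ s) (τ₀ s), ν₀ s⟫ + deriv h s * ⟪ν (γ₀ s), ν₀ s⟫ := by
    simp only [u, inner_add_right, real_inner_smul_right, real_inner_comm (ν₀ s)]
    ring
  rw [eq_inner_smul_add_inner_smul_of_finrank_eq_two (by simp) (hτunit s) (hνunit s) (horth s) V,
    hVτ, hVν, hνu, zero_smul, add_zero]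

/-- first variation of the unit normal under the normal-type perturbation
`Γ_ε = {γ₀(s) + εh(s)ν(γ₀(s))}` of a closed curve `Γ₀` (arclength parametrization `γ₀`,
unit tangent `τ₀`, outward unit normal `ν₀`) by a transversal smooth field `ν`:
for a family `N(ε,·)` of unit normals to `Γ_ε` with `N(0,·) = ν₀`,
`(d/dε)|₀ N = −[h (d_yν[τ₀]·ν₀) + h' (ν·ν₀)] τ₀`. -/
theorem first_variation_unit_normal
    (γ₀ τ₀ ν₀ : ℝ → EuclideanSpace ℝ (Fin 2))
    (ν : EuclideanSpace ℝ (Fin 2) → EuclideanSpace ℝ (Fin 2))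
    (h : ℝ → ℝ) (N : ℝ → ℝ → EuclideanSpace ℝ (Fin 2))
    (hγ : ∀ s, HasDerivAt γ₀ (τ₀ s) s)
    (hτunit : ∀ s, ‖τ₀ s‖ = 1) (hνunit : ∀ s, ‖ν₀ s‖ = 1)
    (horth : ∀ s, ⟪τ₀ s, ν₀ s⟫ = 0)
    (hνsm : ContDiff ℝ 1 ν) (hhsm : ContDiff ℝ 1 h)
    (htrans : ∀ s, ⟪ν (γ₀ s), ν₀ s⟫ ≠ 0)
    (hN0 : ∀ s, N 0 s = ν₀ s)
    (hNunit : ∀ ε s, ‖N ε s‖ = 1)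
    -- `N(ε,s)` is orthogonal to the tangent vector of `Γ_ε` at `γ₀(s) + εh(s)ν(γ₀(s))`:
    (hNorth : ∀ ε s, ⟪N ε s,
      τ₀ s + ε • (deriv h s • ν (γ₀ s) + h s • fderiv ℝ ν (γ₀ s) (τ₀ s))⟫ = 0)
    (hNdiff : ∀ s, DifferentiableAt ℝ (fun ε => N ε s) 0) :
    ∀ s, deriv (fun ε => N ε s) 0
      = -(h s * ⟪fderiv ℝ ν (γ₀ s) (τ₀ s), ν₀ s⟫ + deriv h s * ⟪ν (γ₀ s), ν₀ s⟫) • τ₀ s :=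
  first_variation_unit_normal_general γ₀ τ₀ ν₀ ν h N hτunit hνunit horth hN0 hNunit hNorth hNdiff
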